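/- Let T₁ be a real n₁×n₂ Töplitz matrix and T₂ a real n₂×n₁ Töplitz matrix with n₁ ≤ n₂, both of full rank (rank T₁ = rank T₂ = n₁). Let S be the n₁×n₁ lower shift matrix. Then rank(T₁·T₂ − S·(T₁·T₂)·Sᵀ) ≤ 4, i.e. the Töplitz product T₁T₂ satisfies δ^∇_{S,Sᵀ}{T₁T₂} ≤ 4. -/

import Mathlib

open Matrix

/-- A real matrix is Töplitz if its entries depend only on the difference of indices. -/
def IsToeplitz {m n : ℕ} (T : Matrix (Fin m) (Fin n) ℝ) : Prop :=
  ∃ f : ℤ → ℝ, ∀ i j, T i j = f ((i : ℤ) - (j : ℤ))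

/-- The lower shift matrix: ones on the first subdiagonal, zeros elsewhere. -/
def lowerShift (n : ℕ) : Matrix (Fin n) (Fin n) ℝ :=
  Matrix.of fun i j => if (i : ℕ) = (j : ℕ) + 1 then 1 else 0

/-!
Write `S`, `Z` for the lower shifts of sizes `n₁`, `n₂`. For any matrices,
`T₁ T₂ - S T₁ T₂ Sᵀ = (T₁ - S T₁ Zᵀ) T₂ + S T₁ (Zᵀ T₂ - T₂ Sᵀ)`.
Since the shifts move a Töplitz matrix along its diagonals, `T₁ - S T₁ Zᵀ` vanishes outside its
first row and first column, and `Zᵀ T₂ - T₂ Sᵀ` outside its last row and first column.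
Hence both summands have rank at most `2`.
-/

namespace Matrix

variable {R : Type*} [Field R] {m n : Type*} [Fintype n]

theorem rank_add_le (A B : Matrix m n R) : (A + B).rank ≤ A.rank + B.rank := by
  rw [rank, rank, rank, mulVecLin_add]
  refine (Submodule.finrank_mono ?_).trans (Submodule.finrank_add_le_finrank_add_finrank _ _)
  rintro _ ⟨x, rfl⟩
  exact Submodule.add_mem_sup ⟨x, rfl⟩ ⟨x, rfl⟩

theorem rank_le_card_add_card_of_eq_zero [Fintype m] (A : Matrix m n R) (s : Finset m)
    (t : Finset n) (h : ∀ i j, i ∉ s → j ∉ t → A i j = 0) : A.rank ≤ s.card + t.card := by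
  classical
  have hsplit : A = of (fun i j => if i ∈ s then A i j else 0) +
      of (fun i j => if i ∈ s then 0 else A i j) := by
    ext i j
    by_cases hi : i ∈ s <;> simp [hi]
  have hrows : (of fun i j => if i ∈ s then A i j else 0).rank ≤ s.card :=
    rank_le_card_of_support_subset _ s fun i hi => by
      by_contra hs
      rw [Finset.mem_coe] at hs
      exact hi (funext fun j => by simp [hs])
  have hcols : (of fun i j => if i ∈ s then 0 else A i j).rank ≤ t.card := by
    rw [← rank_transpose]
    refine rank_le_card_of_support_subset _ t fun j hj => ?_
    by_contra ht
    rw [Finset.mem_coe] at ht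
    exact hj (funext fun i => by by_cases hi : i ∈ s <;> simp [hi, h i j _ ht])
  rw [hsplit]
  exact (rank_add_le _ _).trans (add_le_add hrows hcols)

end Matrix

theorem displacement_mul_eq {R : Type*} [Ring R] {l m : Type*} [Fintype l] [Fintype m]
    (A : Matrix l m R) (B : Matrix m l R) (S N : Matrix l l R) (Z : Matrix m m R) :
    A * B - S * (A * B) * N = (A - S * A * Z) * B + S * A * (Z * B - B * N) := by
  simp only [Matrix.sub_mul, Matrix.mul_sub, Matrix.mul_assoc]
  abel

theorem Fin.card_filter_val_eq_le_one (n k : ℕ) :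
    (Finset.univ.filter fun i : Fin n => (i : ℕ) = k).card ≤ 1 :=
  Finset.card_le_one.2 fun a ha b hb => Fin.ext (by simp_all)

theorem lowerShift_apply_of_val_eq_succ_left {n : ℕ} {i i' : Fin n} (h : (i : ℕ) = i' + 1)
    (k : Fin n) : lowerShift n i k = if k = i' then 1 else 0 := by
  simp only [lowerShift, of_apply, Fin.ext_iff, h, Nat.add_right_cancel_iff, eq_comm]

theorem lowerShift_apply_of_val_eq_succ_right {n : ℕ} {j j' : Fin n} (h : (j' : ℕ) = j + 1)
    (k : Fin n) : lowerShift n k j = if k = j' then 1 else 0 := by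
  simp only [lowerShift, of_apply, Fin.ext_iff, h]

theorem lowerShift_mul_apply {m : ℕ} {α : Type*} (M : Matrix (Fin m) α ℝ) {i i' : Fin m}
    (h : (i : ℕ) = i' + 1) (j : α) : (lowerShift m * M) i j = M i' j := by
  simp [mul_apply, lowerShift_apply_of_val_eq_succ_left h]

theorem mul_lowerShift_transpose_apply {n : ℕ} {α : Type*} (M : Matrix α (Fin n) ℝ) (i : α)
    {j j' : Fin n} (h : (j : ℕ) = j' + 1) : (M * (lowerShift n)ᵀ) i j = M i j' := by
  simp [mul_apply, lowerShift_apply_of_val_eq_succ_left h]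

theorem lowerShift_transpose_mul_apply {m : ℕ} {α : Type*} (M : Matrix (Fin m) α ℝ)
    {i i' : Fin m} (h : (i' : ℕ) = i + 1) (j : α) : ((lowerShift m)ᵀ * M) i j = M i' j := by
  simp [mul_apply, lowerShift_apply_of_val_eq_succ_right h]

theorem IsToeplitz.apply_eq_apply {m n : ℕ} {T : Matrix (Fin m) (Fin n) ℝ} (hT : IsToeplitz T)
    {i i' : Fin m} {j j' : Fin n} (h : (i : ℤ) - j = i' - j') : T i j = T i' j' := by
  obtain ⟨f, hf⟩ := hT
  rw [hf, hf, h]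

namespace IsToeplitz

variable {m n : ℕ}

theorem sub_lowerShift_mul_mul_transpose_apply {T : Matrix (Fin m) (Fin n) ℝ}
    (hT : IsToeplitz T) {i : Fin m} {j : Fin n} (hi : (i : ℕ) ≠ 0) (hj : (j : ℕ) ≠ 0) :
    (T - lowerShift m * T * (lowerShift n)ᵀ) i j = 0 := by
  have hi' : (i : ℕ) - 1 < m := by omega
  have hj' : (j : ℕ) - 1 < n := by omega
  rw [Matrix.sub_apply,
    mul_lowerShift_transpose_apply _ _ (j' := ⟨j - 1, hj'⟩) (by dsimp only; omega),
    lowerShift_mul_apply _ (i' := ⟨i - 1, hi'⟩) (by dsimp only; omega),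
    hT.apply_eq_apply (i' := ⟨i - 1, hi'⟩) (j' := ⟨j - 1, hj'⟩) (by dsimp only; omega),
    sub_self]

theorem lowerShift_transpose_mul_sub_mul_transpose_apply {T : Matrix (Fin n) (Fin m) ℝ}
    (hT : IsToeplitz T) {i : Fin n} {j : Fin m} (hi : (i : ℕ) ≠ n - 1) (hj : (j : ℕ) ≠ 0) :
    ((lowerShift n)ᵀ * T - T * (lowerShift m)ᵀ) i j = 0 := by
  have hi' : (i : ℕ) + 1 < n := by omega
  have hj' : (j : ℕ) - 1 < m := by omega
  rw [Matrix.sub_apply,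
    lowerShift_transpose_mul_apply _ (i' := ⟨i + 1, hi'⟩) rfl,
    mul_lowerShift_transpose_apply _ _ (j' := ⟨j - 1, hj'⟩) (by dsimp only; omega),
    hT.apply_eq_apply (i' := i) (j' := ⟨j - 1, hj'⟩) (by dsimp only; omega),
    sub_self]

theorem rank_sub_lowerShift_mul_mul_transpose_le {T : Matrix (Fin m) (Fin n) ℝ}
    (hT : IsToeplitz T) : (T - lowerShift m * T * (lowerShift n)ᵀ).rank ≤ 2 :=
  (rank_le_card_add_card_of_eq_zero _ _ _ fun _ _ hi hj =>
    hT.sub_lowerShift_mul_mul_transpose_apply (by simpa using hi) (by simpa using hj)).trans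
    (add_le_add (Fin.card_filter_val_eq_le_one m 0) (Fin.card_filter_val_eq_le_one n 0))

theorem rank_lowerShift_transpose_mul_sub_mul_transpose_le {T : Matrix (Fin n) (Fin m) ℝ}
    (hT : IsToeplitz T) : ((lowerShift n)ᵀ * T - T * (lowerShift m)ᵀ).rank ≤ 2 :=
  (rank_le_card_add_card_of_eq_zero _ _ _ fun _ _ hi hj =>
    hT.lowerShift_transpose_mul_sub_mul_transpose_apply (by simpa using hi)
      (by simpa using hj)).trans
    (add_le_add (Fin.card_filter_val_eq_le_one n (n - 1)) (Fin.card_filter_val_eq_le_one m 0))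

end IsToeplitz

theorem toeplitz_product_nabla_displacement_general (n₁ n₂ : ℕ)
    (T₁ : Matrix (Fin n₁) (Fin n₂) ℝ) (T₂ : Matrix (Fin n₂) (Fin n₁) ℝ)
    (hT₁ : IsToeplitz T₁) (hT₂ : IsToeplitz T₂) :
    (T₁ * T₂ - lowerShift n₁ * (T₁ * T₂) * (lowerShift n₁)ᵀ).rank ≤ 4 := by
  rw [displacement_mul_eq T₁ T₂ (lowerShift n₁) (lowerShift n₁)ᵀ (lowerShift n₂)ᵀ]
  calc _ ≤ ((T₁ - lowerShift n₁ * T₁ * (lowerShift n₂)ᵀ) * T₂).rank +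
        (lowerShift n₁ * T₁ * ((lowerShift n₂)ᵀ * T₂ - T₂ * (lowerShift n₁)ᵀ)).rank :=
        rank_add_le _ _
    _ ≤ 2 + 2 :=
        add_le_add ((rank_mul_le_left _ _).trans hT₁.rank_sub_lowerShift_mul_mul_transpose_le)
          ((rank_mul_le_right _ _).trans hT₂.rank_lowerShift_transpose_mul_sub_mul_transpose_le)

theorem toeplitz_product_nabla_displacement (n₁ n₂ : ℕ) (hn : n₁ ≤ n₂)
    (T₁ : Matrix (Fin n₁) (Fin n₂) ℝ) (T₂ : Matrix (Fin n₂) (Fin n₁) ℝ)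
    (hT₁ : IsToeplitz T₁) (hT₂ : IsToeplitz T₂)
    (hr₁ : T₁.rank = n₁) (hr₂ : T₂.rank = n₁) :
    (T₁ * T₂ - lowerShift n₁ * (T₁ * T₂) * (lowerShift n₁)ᵀ).rank ≤ 4 :=
  toeplitz_product_nabla_displacement_general n₁ n₂ T₁ T₂ hT₁ hT₂
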